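/- In the Gaussian simple mediation model with n ≥ 5, Var(γ̂ | x) = θ_x² (σ_u²/σ_v²)/(n-4) + β_m² σ_v²/(x'x) + (σ_u²/(x'x))/(n-4). -/

import Mathlib

open MeasureTheory ProbabilityTheory Real

/-- Density of the Student t distribution with `ν` degrees of freedom. -/
noncomputable def tPdf (ν t : ℝ) : ℝ :=
  Real.Gamma ((ν + 1) / 2) / (Real.sqrt (π * ν) * Real.Gamma (ν / 2)) *
    (1 + t ^ 2 / ν) ^ (-(ν + 1) / 2)

/-- Standard Student t distribution with `ν` degrees of freedom. -/
noncomputable def tMeasure (ν : ℝ) : Measure ℝ :=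
  volume.withDensity (fun t => ENNReal.ofReal (tPdf ν t))

/-! The variance of a product of independent square-integrable factors is
`Var X Var Y + Var X (E Y)² + (E X)² Var Y`, so everything reduces to the first two moments of
`θ̂ₓ` (read off the Gaussian law) and of `T`. For `T ~ t(ν)` the mean vanishes by symmetry, and
an integration by parts gives `(ν - 2) ∫ t² (1 + t²/ν)^(-(ν+1)/2) = ν ∫ (1 + t²/ν)^(-(ν+1)/2)`,
hence `E T² = ν / (ν - 2)`. The normalising constant of `tPdf` is never evaluated: that the law
of `T` is a probability measure is all that is used about it. -/

open Filter

section OneAddSqDivRpow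

variable {ν : ℝ}

lemma integrable_one_add_sq_div_rpow_neg (hν : 0 < ν) {p : ℝ} (hp : 1 < 2 * p) :
    Integrable fun t : ℝ => (1 + t ^ 2 / ν) ^ (-p) := by
  have hint : Integrable fun x : ℝ => (1 + ‖x‖ ^ 2) ^ (-(2 * p) / 2) :=
    integrable_rpow_neg_one_add_norm_sq (by simpa using hp)
  have hsq : √ν ≠ 0 := (sqrt_pos.2 hν).ne'
  refine (hint.comp_div hsq).congr (ae_of_all _ fun t => ?_)
  simp [div_pow, sq_sqrt hν.le, neg_div]

lemma sq_mul_one_add_sq_div_rpow_neg (hν : 0 < ν) (p t : ℝ) :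
    t ^ 2 * (1 + t ^ 2 / ν) ^ (-p) =
      ν * ((1 + t ^ 2 / ν) ^ (1 - p) - (1 + t ^ 2 / ν) ^ (-p)) := by
  have hb : 0 < 1 + t ^ 2 / ν := by positivity
  rw [sub_eq_add_neg 1 p, rpow_add hb, rpow_one]
  field_simp
  ring

lemma integrable_sq_mul_one_add_sq_div_rpow_neg (hν : 0 < ν) {p : ℝ} (hp : 3 < 2 * p) :
    Integrable fun t : ℝ => t ^ 2 * (1 + t ^ 2 / ν) ^ (-p) := by
  simp_rw [sq_mul_one_add_sq_div_rpow_neg hν p]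
  have hFq := integrable_one_add_sq_div_rpow_neg hν (p := p - 1) (by linarith)
  rw [neg_sub] at hFq
  exact (hFq.sub (integrable_one_add_sq_div_rpow_neg hν (by linarith))).const_mul ν

lemma hasDerivAt_mul_one_add_sq_div_rpow (hν : 0 < ν) (p t : ℝ) :
    HasDerivAt (fun t : ℝ => t * (1 + t ^ 2 / ν) ^ (1 - p))
      ((1 + t ^ 2 / ν) ^ (1 - p) - 2 * (p - 1) / ν * (t ^ 2 * (1 + t ^ 2 / ν) ^ (-p))) t := by
  have hb : 0 < 1 + t ^ 2 / ν := by positivity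
  have hbase : HasDerivAt (fun t : ℝ => 1 + t ^ 2 / ν) (2 * t / ν) t := by
    simpa using ((hasDerivAt_pow 2 t).div_const ν).const_add 1
  refine ((hasDerivAt_id t).mul (hbase.rpow_const (p := 1 - p) (Or.inl hb.ne'))).congr_deriv ?_
  rw [show 1 - p - 1 = -p by ring]
  simp only [id]
  ring

lemma tendsto_mul_one_add_sq_div_rpow_cocompact (hν : 0 < ν) {p : ℝ} (hp : 3 < 2 * p) :
    Tendsto (fun t : ℝ => t * (1 + t ^ 2 / ν) ^ (1 - p)) (cocompact ℝ) (nhds 0) := by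
  have hbound (t : ℝ) :
      ‖t * (1 + t ^ 2 / ν) ^ (1 - p)‖ ≤ √ν * (1 + t ^ 2 / ν) ^ (-(p - 3 / 2)) := by
    have hb : 0 < 1 + t ^ 2 / ν := by positivity
    have habs : |t| ≤ √ν * (1 + t ^ 2 / ν) ^ (1 / 2 : ℝ) := by
      rw [← sqrt_eq_rpow, ← sqrt_mul hν.le, ← sqrt_sq_eq_abs, mul_add,
        mul_div_cancel₀ _ hν.ne']
      exact sqrt_le_sqrt (by linarith)
    rw [norm_mul, norm_of_nonneg (rpow_nonneg hb.le _), norm_eq_abs,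
      show -(p - 3 / 2) = 1 / 2 + (1 - p) by ring, rpow_add hb, ← mul_assoc]
    exact mul_le_mul_of_nonneg_right habs (rpow_nonneg hb.le _)
  have hsq : Tendsto (fun t : ℝ => t ^ 2) (cocompact ℝ) atTop := by
    simpa only [Function.comp_def, norm_eq_abs, sq_abs] using
      (tendsto_pow_atTop two_ne_zero).comp (tendsto_norm_cocompact_atTop (E := ℝ))
  have hbase : Tendsto (fun t : ℝ => 1 + t ^ 2 / ν) (cocompact ℝ) atTop :=
    tendsto_atTop_add_const_left _ 1 (hsq.atTop_div_const hν)
  refine squeeze_zero_norm hbound ?_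
  simpa using ((tendsto_rpow_neg_atTop (by linarith : 0 < p - 3 / 2)).comp hbase).const_mul √ν

-- Integrating by parts against `t`: the boundary terms `t (1 + t²/ν)^{1-p}` vanish at `±∞`.
lemma integral_sq_mul_one_add_sq_div_rpow_neg (hν : 0 < ν) {p : ℝ} (hp : 3 < 2 * p) :
    (2 * p - 3) * ∫ t : ℝ, t ^ 2 * (1 + t ^ 2 / ν) ^ (-p) =
      ν * ∫ t : ℝ, (1 + t ^ 2 / ν) ^ (-p) := by
  have hFp := integrable_one_add_sq_div_rpow_neg hν (p := p) (by linarith)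
  have hFq := integrable_one_add_sq_div_rpow_neg hν (p := p - 1) (by linarith)
  rw [neg_sub] at hFq
  have hS := integrable_sq_mul_one_add_sq_div_rpow_neg hν hp
  have hlim := tendsto_mul_one_add_sq_div_rpow_cocompact hν hp
  have hparts := integral_of_hasDerivAt_of_tendsto (hasDerivAt_mul_one_add_sq_div_rpow hν p)
    (hFq.sub (hS.const_mul _)) (hlim.mono_left atBot_le_cocompact)
    (hlim.mono_left atTop_le_cocompact)
  have hsplit : ∫ t : ℝ, t ^ 2 * (1 + t ^ 2 / ν) ^ (-p) =
      ν * ((∫ t : ℝ, (1 + t ^ 2 / ν) ^ (1 - p)) - ∫ t : ℝ, (1 + t ^ 2 / ν) ^ (-p)) := by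
    simp_rw [sq_mul_one_add_sq_div_rpow_neg hν p]
    rw [integral_const_mul, integral_sub hFq hFp]
  rw [integral_sub hFq (hS.const_mul _), integral_const_mul, sub_self, sub_eq_zero, hsplit]
    at hparts
  rw [hsplit]
  set Fq := ∫ t : ℝ, (1 + t ^ 2 / ν) ^ (1 - p)
  set Fp := ∫ t : ℝ, (1 + t ^ 2 / ν) ^ (-p)
  field_simp at hparts
  linear_combination -ν * hparts

end OneAddSqDivRpow

section StudentT

variable {ν : ℝ}

lemma tPdf_eq (t : ℝ) :
    tPdf ν t = Gamma ((ν + 1) / 2) / (√(π * ν) * Gamma (ν / 2)) *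
      (1 + t ^ 2 / ν) ^ (-((ν + 1) / 2)) := by
  rw [tPdf, neg_div]

lemma tPdf_pos (hν : 0 < ν) (t : ℝ) : 0 < tPdf ν t := by
  have h₁ : 0 < Gamma ((ν + 1) / 2) := Gamma_pos_of_pos (by linarith)
  have h₂ : 0 < Gamma (ν / 2) := Gamma_pos_of_pos (by linarith)
  have h₃ : 0 < √(π * ν) := sqrt_pos.2 (by positivity)
  have h₄ : 0 < (1 + t ^ 2 / ν) ^ (-(ν + 1) / 2) := rpow_pos_of_pos (by positivity) _
  rw [tPdf]
  positivity

lemma tPdf_neg (t : ℝ) : tPdf ν (-t) = tPdf ν t := by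
  simp [tPdf]

lemma measurable_tPdf : Measurable (tPdf ν) := by
  unfold tPdf
  fun_prop

lemma tMeasure_eq_withDensity_toNNReal :
    tMeasure ν = volume.withDensity fun t => ((tPdf ν t).toNNReal : ENNReal) :=
  rfl

lemma integral_tMeasure (hν : 0 < ν) (g : ℝ → ℝ) :
    ∫ t, g t ∂tMeasure ν = ∫ t, tPdf ν t * g t := by
  rw [tMeasure_eq_withDensity_toNNReal,
    integral_withDensity_eq_integral_smul measurable_tPdf.real_toNNReal]
  simp [NNReal.smul_def, Real.coe_toNNReal _ (tPdf_pos hν _).le]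

lemma integrable_tMeasure_iff (hν : 0 < ν) {g : ℝ → ℝ} :
    Integrable g (tMeasure ν) ↔ Integrable fun t => tPdf ν t * g t := by
  rw [tMeasure_eq_withDensity_toNNReal,
    integrable_withDensity_iff_integrable_smul measurable_tPdf.real_toNNReal]
  simp [NNReal.smul_def, Real.coe_toNNReal _ (tPdf_pos hν _).le]

lemma tMeasure_ne_zero (hν : 0 < ν) : tMeasure ν ≠ 0 := by
  intro h
  have hzero := withDensity_eq_zero measurable_tPdf.ennreal_ofReal.aemeasurable h
  obtain ⟨t, ht⟩ := hzero.exists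
  simpa using (ENNReal.ofReal_pos.2 (tPdf_pos hν t)).ne' ht

lemma integral_id_tMeasure (hν : 0 < ν) : ∫ t, t ∂tMeasure ν = 0 := by
  rw [integral_tMeasure hν]
  have h := integral_neg_eq_self (fun t => tPdf ν t * t) volume
  simp only [tPdf_neg, mul_neg, integral_neg] at h
  linarith

lemma memLp_id_tMeasure (hν : 2 < ν) : MemLp id 2 (tMeasure ν) := by
  refine (memLp_two_iff_integrable_sq aestronglyMeasurable_id).2 ?_
  rw [integrable_tMeasure_iff (by linarith)]
  simp_rw [tPdf_eq, mul_assoc, mul_comm _ (_ ^ (2 : ℕ))]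
  exact (integrable_sq_mul_one_add_sq_div_rpow_neg (by linarith) (by linarith)).const_mul _

lemma integral_sq_tMeasure (hν : 2 < ν) [IsProbabilityMeasure (tMeasure ν)] :
    ∫ t, t ^ 2 ∂tMeasure ν = ν / (ν - 2) := by
  have hν₀ : 0 < ν := by linarith
  have hnorm : ∫ t, tPdf ν t = 1 := by
    simpa [integral_tMeasure hν₀] using integral_const (μ := tMeasure ν) (1 : ℝ)
  have hmoment := integral_sq_mul_one_add_sq_div_rpow_neg hν₀ (p := (ν + 1) / 2) (by linarith)
  simp_rw [tPdf_eq] at hnorm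
  rw [integral_tMeasure hν₀, eq_div_iff (by linarith)]
  simp_rw [tPdf_eq, mul_assoc, mul_comm _ (_ ^ (2 : ℕ))]
  rw [integral_const_mul] at hnorm ⊢
  linear_combination (Gamma ((ν + 1) / 2) / (√(π * ν) * Gamma (ν / 2))) * hmoment + ν * hnorm

lemma variance_id_tMeasure (hν : 2 < ν) [IsProbabilityMeasure (tMeasure ν)] :
    Var[id; tMeasure ν] = ν / (ν - 2) := by
  rw [variance_eq_sub (memLp_id_tMeasure hν)]
  simp [integral_id_tMeasure (by linarith : 0 < ν), integral_sq_tMeasure hν]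

end StudentT

lemma ProbabilityTheory.IndepFun.variance_fun_mul {Ω : Type*} [MeasurableSpace Ω] {μ : Measure Ω}
    [IsProbabilityMeasure μ] {X Y : Ω → ℝ} (h : IndepFun X Y μ) (hX : MemLp X 2 μ)
    (hY : MemLp Y 2 μ) :
    Var[fun ω => X ω * Y ω; μ] =
      Var[X; μ] * Var[Y; μ] + Var[X; μ] * μ[Y] ^ 2 + μ[X] ^ 2 * Var[Y; μ] := by
  have hsq : IndepFun (fun ω => X ω ^ 2) (fun ω => Y ω ^ 2) μ :=
    h.comp (measurable_id.pow_const 2) (measurable_id.pow_const 2)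
  have hXY : MemLp (fun ω => X ω * Y ω) 2 μ := by
    refine (memLp_two_iff_integrable_sq (hX.1.mul hY.1)).2 ?_
    simpa only [Pi.mul_def, mul_pow] using hsq.integrable_mul hX.integrable_sq hY.integrable_sq
  have hmean : μ[fun ω => X ω * Y ω] = μ[X] * μ[Y] :=
    h.integral_fun_mul_eq_mul_integral hX.1 hY.1
  have hmean_sq : μ[(fun ω => X ω * Y ω) ^ 2] = μ[X ^ 2] * μ[Y ^ 2] := by
    simpa only [Pi.pow_apply, mul_pow] using
      hsq.integral_fun_mul_eq_mul_integral hX.integrable_sq.1 hY.integrable_sq.1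
  rw [variance_eq_sub hXY, variance_eq_sub hX, variance_eq_sub hY, hmean, hmean_sq]
  ring

lemma ProbabilityTheory.HasLaw.memLp {Ω E : Type*} [MeasurableSpace Ω] [NormedAddCommGroup E]
    [MeasurableSpace E] {P : Measure Ω} {μ : Measure E} {X : Ω → E} {p : ENNReal}
    (hX : HasLaw X μ P) (hμ : MemLp id p μ) : MemLp X p P := by
  rw [← hX.map_eq] at hμ
  exact (memLp_map_measure_iff hμ.1 hX.aemeasurable).1 hμ

lemma ProbabilityTheory.hasLaw_of_map_eq {Ω E : Type*} [MeasurableSpace Ω] [MeasurableSpace E]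
    {P : Measure Ω} {μ : Measure E} {X : Ω → E} (h : P.map X = μ) (hμ : μ ≠ 0) :
    HasLaw X μ P :=
  ⟨.of_map_ne_zero (h ▸ hμ), h⟩

theorem stmt16_general {Ω : Type*} [MeasurableSpace Ω] (Pr : Measure Ω) [IsProbabilityMeasure Pr]
    {n : ℕ} (hn : 5 ≤ n) (θx βm σu σv xx : ℝ) (hσv : 0 < σv)
    (hxx : 0 < xx)
    (θhat T : Ω → ℝ)
    (hθ : Measure.map θhat Pr = gaussianReal θx (σv ^ 2 / xx).toNNReal)
    (hT : Measure.map T Pr = tMeasure ((n : ℝ) - 2))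
    (hind : IndepFun θhat T Pr) :
    variance
        (fun ω => θhat ω * (βm + σu / (σv * Real.sqrt ((n : ℝ) - 2)) * T ω)) Pr
      = θx ^ 2 * (σu ^ 2 / σv ^ 2) / ((n : ℝ) - 4)
        + βm ^ 2 * σv ^ 2 / xx + (σu ^ 2 / xx) / ((n : ℝ) - 4) := by
  set ν : ℝ := (n : ℝ) - 2
  set c : ℝ := σu / (σv * √ν)
  have hν : 2 < ν := by
    have : (5 : ℝ) ≤ n := by exact_mod_cast hn
    linarith
  have hθlaw := hasLaw_of_map_eq hθ (IsProbabilityMeasure.ne_zero _)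
  have hTlaw := hasLaw_of_map_eq hT (tMeasure_ne_zero (by linarith))
  have := hTlaw.isProbabilityMeasure_iff.1 ‹_›
  have hTL2 : MemLp T 2 Pr := hTlaw.memLp (memLp_id_tMeasure hν)
  have hβhat_mean : Pr[fun ω => βm + c * T ω] = βm := by
    rw [integral_add (integrable_const _) ((hTL2.integrable one_le_two).const_mul c),
      integral_const_mul, hTlaw.integral_eq, integral_id_tMeasure (by linarith)]
    simp
  have hind_βhat : IndepFun θhat (fun ω => βm + c * T ω) Pr :=
    hind.comp (ψ := fun t => βm + c * t) measurable_id (by fun_prop)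
  rw [hind_βhat.variance_fun_mul
      (hθlaw.memLp (memLp_id_gaussianReal 2)) ((memLp_const βm).add (hTL2.const_mul c)),
    variance_const_add (hTL2.1.const_mul c), variance_const_mul, hTlaw.variance_eq,
    variance_id_tMeasure hν, hθlaw.variance_eq, variance_id_gaussianReal, hθlaw.integral_eq,
    integral_id_gaussianReal, hβhat_mean, Real.coe_toNNReal _ (by positivity)]
  have hβhat_var : c ^ 2 * (ν / (ν - 2)) = σu ^ 2 / σv ^ 2 / ((n : ℝ) - 4) := by
    rw [div_pow, mul_pow, sq_sqrt (by linarith), show ν - 2 = (n : ℝ) - 4 by ring]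
    field_simp
  rw [hβhat_var]
  field_simp
  ring

/-- Variance of `γ̂ = θ̂ₓ β̂ₘ`, where conditional on `x`, `θ̂ₓ ~ N(θₓ, σᵥ²/(x'x))`
independently of `β̂ₘ = βₘ + (σᵤ/(σᵥ√(n-2))) T` with `T ~ t(n-2)` and `n ≥ 5`. -/
theorem stmt16 {Ω : Type*} [MeasurableSpace Ω] (Pr : Measure Ω) [IsProbabilityMeasure Pr]
    {n : ℕ} (hn : 5 ≤ n) (θx βm σu σv xx : ℝ) (hσu : 0 < σu) (hσv : 0 < σv)
    (hxx : 0 < xx)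
    (θhat T : Ω → ℝ)
    (hθ : Measure.map θhat Pr = gaussianReal θx (σv ^ 2 / xx).toNNReal)
    (hT : Measure.map T Pr = tMeasure ((n : ℝ) - 2))
    (hind : IndepFun θhat T Pr) :
    variance
        (fun ω => θhat ω * (βm + σu / (σv * Real.sqrt ((n : ℝ) - 2)) * T ω)) Pr
      = θx ^ 2 * (σu ^ 2 / σv ^ 2) / ((n : ℝ) - 4)
        + βm ^ 2 * σv ^ 2 / xx + (σu ^ 2 / xx) / ((n : ℝ) - 4) :=
  stmt16_general Pr hn θx βm σu σv xx hσv hxx θhat T hθ hT hind
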